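/- Let K be a field and h(t,z) ∈ K⟨t,z⟩ be any element of the free associative algebra on t and z. Then the z-endomorphism σ_h = (x + z·h(xz−zy, z), y + h(xz−zy, z)·z) of K⟨x,y,z⟩ is a z-automorphism, and its inverse is σ_{−h}. -/

import Mathlib

open MonoidAlgebra

noncomputable section

/-- The free associative algebra `K⟨x,y,z⟩`, realized as the monoid algebra of the
free monoid on three letters. -/
abbrev FA (K : Type) [Field K] := MonoidAlgebra K (FreeMonoid (Fin 3))

/-- The free associative algebra `K⟨t,z⟩` on two letters. -/
abbrev FA2 (K : Type) [Field K] := MonoidAlgebra K (FreeMonoid (Fin 2))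

variable (K : Type) [Field K]

/-- The generators `x = Xv 0`, `y = Xv 1`, `z = Xv 2`. -/
def Xv (i : Fin 3) : FA K := MonoidAlgebra.of K (FreeMonoid (Fin 3)) (FreeMonoid.of i)

/-- The substitution (endomorphism) sending the generators `x, y, z` to `f 0, f 1, f 2`. -/
def subst (f : Fin 3 → FA K) : FA K →ₐ[K] FA K :=
  MonoidAlgebra.lift K (FA K) (FreeMonoid (Fin 3)) (FreeMonoid.lift f)

/-- The substitution homomorphism `K⟨t,z⟩ → K⟨x,y,z⟩` sending `t ↦ f 0`, `z ↦ f 1`. -/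
def subst2 (f : Fin 2 → FA K) : FA2 K →ₐ[K] FA K :=
  MonoidAlgebra.lift K (FA K) (FreeMonoid (Fin 2)) (FreeMonoid.lift f)

/-- `h(xz - zy, z)`: the image of `h(t,z)` under `t ↦ xz - zy`, `z ↦ z`. -/
def hSub (h : FA2 K) : FA K :=
  subst2 K ![Xv K 0 * Xv K 2 - Xv K 2 * Xv K 1, Xv K 2] h

/-- The `z`-endomorphism `σ_h = (x + z·h(xz−zy,z), y + h(xz−zy,z)·z, z)`. -/
def sigmaH (h : FA2 K) : FA K →ₐ[K] FA K :=
  subst K ![Xv K 0 + Xv K 2 * hSub K h, Xv K 1 + hSub K h * Xv K 2, Xv K 2]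

/-!
Writing `H = h(xz − zy, z)`, we have `(x + zH)z − z(y + Hz) = xz − zy`, so every `σ_h` fixes
both `xz − zy` and `z`, hence every element `g(xz − zy, z)`. Consequently
`σ_h(σ_g(x)) = x + z·h(xz−zy,z) + z·g(xz−zy,z)`, and likewise for `y`, so `h ↦ σ_h` turns
addition into composition: `σ_h ∘ σ_g = σ_{h+g}` and `σ_0 = id`.
-/

namespace MonoidAlgebra

variable {R A α : Type*} [CommSemiring R] [Semiring A] [Algebra R A]

theorem lift_freeMonoidLift_of (f : α → A) (i : α) :
    lift R A (FreeMonoid α) (FreeMonoid.lift f) (of R (FreeMonoid α) (FreeMonoid.of i)) = f i := by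
  simp

theorem algHom_ext_freeMonoid {φ ψ : MonoidAlgebra R (FreeMonoid α) →ₐ[R] A}
    (h : ∀ i, φ (of R _ (FreeMonoid.of i)) = ψ (of R _ (FreeMonoid.of i))) : φ = ψ :=
  algHom_ext' (FreeMonoid.hom_eq h) (Subsingleton.elim _ _)

theorem apply_lift_freeMonoidLift_of_forall_apply_eq {φ : A →ₐ[R] A} {f : α → A}
    (hf : ∀ i, φ (f i) = f i) (g : MonoidAlgebra R (FreeMonoid α)) :
    φ (lift R A (FreeMonoid α) (FreeMonoid.lift f) g) =
      lift R A (FreeMonoid α) (FreeMonoid.lift f) g := by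
  have hcomp : φ.comp (lift R A (FreeMonoid α) (FreeMonoid.lift f)) =
      lift R A (FreeMonoid α) (FreeMonoid.lift f) :=
    algHom_ext_freeMonoid fun i => by simp [hf]
  exact DFunLike.congr_fun hcomp g

end MonoidAlgebra

section

variable {K}

theorem algHom_ext_Xv {φ ψ : FA K →ₐ[K] FA K} (h : ∀ i, φ (Xv K i) = ψ (Xv K i)) : φ = ψ :=
  MonoidAlgebra.algHom_ext_freeMonoid h

@[simp]
theorem subst_Xv (f : Fin 3 → FA K) (i : Fin 3) : subst K f (Xv K i) = f i :=
  MonoidAlgebra.lift_freeMonoidLift_of f i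

@[simp]
theorem sigmaH_x (h : FA2 K) : sigmaH K h (Xv K 0) = Xv K 0 + Xv K 2 * hSub K h :=
  subst_Xv _ 0

@[simp]
theorem sigmaH_y (h : FA2 K) : sigmaH K h (Xv K 1) = Xv K 1 + hSub K h * Xv K 2 :=
  subst_Xv _ 1

@[simp]
theorem sigmaH_z (h : FA2 K) : sigmaH K h (Xv K 2) = Xv K 2 :=
  subst_Xv _ 2

theorem sigmaH_commutator (h : FA2 K) :
    sigmaH K h (Xv K 0 * Xv K 2 - Xv K 2 * Xv K 1) = Xv K 0 * Xv K 2 - Xv K 2 * Xv K 1 := by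
  simp only [map_sub, map_mul, sigmaH_x, sigmaH_y, sigmaH_z]
  noncomm_ring

theorem sigmaH_hSub (h g : FA2 K) : sigmaH K h (hSub K g) = hSub K g :=
  MonoidAlgebra.apply_lift_freeMonoidLift_of_forall_apply_eq
    (fun i => by fin_cases i <;> simp [sigmaH_commutator]) g

theorem hSub_add (h g : FA2 K) : hSub K (h + g) = hSub K h + hSub K g :=
  map_add _ h g

theorem hSub_zero : hSub K 0 = 0 :=
  map_zero _

theorem sigmaH_zero : sigmaH K 0 = AlgHom.id K (FA K) :=
  algHom_ext_Xv fun i => by fin_cases i <;> simp [hSub_zero]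

theorem sigmaH_comp_sigmaH (h g : FA2 K) :
    (sigmaH K h).comp (sigmaH K g) = sigmaH K (h + g) :=
  algHom_ext_Xv fun i => by
    fin_cases i <;> simp [sigmaH_hSub, hSub_add, mul_add, add_mul, add_assoc]

end

/-- For any `h(t,z) ∈ K⟨t,z⟩`, the `z`-endomorphism
`σ_h = (x + z·h(xz−zy,z), y + h(xz−zy,z)·z, z)` of `K⟨x,y,z⟩` is a `z`-automorphism,
with inverse `σ₋ₕ`. -/
theorem sigmaH_is_z_automorphism_with_inverse (h : FA2 K) :
    (sigmaH K h).comp (sigmaH K (-h)) = AlgHom.id K (FA K) ∧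
    (sigmaH K (-h)).comp (sigmaH K h) = AlgHom.id K (FA K) ∧
    sigmaH K h (Xv K 2) = Xv K 2 := by
  refine ⟨?_, ?_, sigmaH_z h⟩
  · rw [sigmaH_comp_sigmaH, add_neg_cancel, sigmaH_zero]
  · rw [sigmaH_comp_sigmaH, neg_add_cancel, sigmaH_zero]
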